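/- arXiv:2503.10771 — 4 statements merged into one kernel-verified Lean document; each statement's English description precedes it below -/
import Mathlib

section
/- Let X be a complex Hilbert space and let S be a compact, self-adjoint, injective, nonnegative continuous linear operator on X (⟨Su, u⟩ ≥ 0 for all u and ker S = {0}). Let k be a nonzero real number such that 1/k² is not an eigenvalue of S. Let W be the closed linear span of all eigenvectors of S corresponding to eigenvalues μ with μ > 1/k², let P_W be the orthogonal projection of X onto W, and set T := id_X − 2P_W. Then T is bijective and there exists γ > 0 such that Re⟨(id_X − k²S)(Tu), u⟩ ≥ γ‖u‖² for all u ∈ X; that is, the operator id_X − k²S is T-coercive. -/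
/-!
`T = id - 2 P_W` is minus the reflection in `W`, hence an involution. Write `ε = 1 / k²`.
Because `S` is compact and self-adjoint, only finitely many eigenvalues exceed `ε`, and the
corresponding eigenspaces are mutually orthogonal; so `⟪S w, w⟫ ≥ c ‖w‖²` with some `c > ε` on
their span, hence on its closure `W`. The orthogonal complement `Wᗮ` is `S`-invariant, and the
restriction of `S` to it is compact and positive, so its norm lies in its spectrum and is an
eigenvalue (Fredholm alternative). An eigenvector in `Wᗮ` for an eigenvalue `≥ ε` is excluded
(it would lie in `W`, or `ε` would be an eigenvalue), so `⟪S v, v⟫ ≤ m ‖v‖²` on `Wᗮ` with `m < ε`.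
Finally, for `u = w + v` we get `T u = v - w`; the cross terms vanish by invariance, and
`Re ⟪(1 - k² S) T u, u⟫ = (k² ⟪S w, w⟫ - ‖w‖²) + (‖v‖² - k² ⟪S v, v⟫) ≥ γ ‖u‖²`.
-/

open Module End RCLike Submodule Topology
open scoped InnerProductSpace

section

variable {𝕜 E : Type*} [RCLike 𝕜] [NormedAddCommGroup E] [InnerProductSpace 𝕜 E]

namespace ContinuousLinearMap

def IsTCoercive (A T : E →L[𝕜] E) : Prop :=
  Function.Bijective T ∧ ∃ γ : ℝ, 0 < γ ∧ ∀ u, γ * ‖u‖ ^ 2 ≤ re ⟪A (T u), u⟫_𝕜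

end ContinuousLinearMap

namespace Submodule

variable (K : Submodule 𝕜 E) [K.HasOrthogonalProjection]

theorem id_sub_two_smul_starProjection_apply (u : E) :
    (ContinuousLinearMap.id 𝕜 E - 2 • K.starProjection) u = -K.reflection u := by
  simp [reflection_apply]

theorem isTCoercive_id_sub_two_smul_starProjection {A : E →L[𝕜] E}
    (hAK : ∀ w ∈ K, A w ∈ K) (hAKperp : ∀ v ∈ Kᗮ, A v ∈ Kᗮ) {γ : ℝ} (hγ : 0 < γ)
    (hK : ∀ w ∈ K, γ * ‖w‖ ^ 2 ≤ -re ⟪A w, w⟫_𝕜) (hKperp : ∀ v ∈ Kᗮ, γ * ‖v‖ ^ 2 ≤ re ⟪A v, v⟫_𝕜) :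
    A.IsTCoercive (ContinuousLinearMap.id 𝕜 E - 2 • K.starProjection) := by
  refine ⟨?_, γ, hγ, fun u => ?_⟩
  · rw [funext K.id_sub_two_smul_starProjection_apply]
    exact (Equiv.neg E).bijective.comp K.reflection.bijective
  obtain ⟨w, hw, v, hv, rfl⟩ := K.exists_add_mem_mem_orthogonal u
  have hTu : (ContinuousLinearMap.id 𝕜 E - 2 • K.starProjection) (w + v) = v - w := by
    rw [id_sub_two_smul_starProjection_apply, map_add, reflection_mem_subspace_eq_self hw,
      reflection_mem_subspace_orthogonalComplement_eq_neg hv]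
    abel
  have hpyth : ‖w + v‖ ^ 2 = ‖w‖ ^ 2 + ‖v‖ ^ 2 := by
    rw [norm_add_sq (𝕜 := 𝕜), K.inner_right_of_mem_orthogonal hw hv, map_zero]
    ring
  have hcross₁ : ⟪A w, v⟫_𝕜 = 0 := K.inner_right_of_mem_orthogonal (hAK w hw) hv
  have hcross₂ : ⟪A v, w⟫_𝕜 = 0 := K.inner_left_of_mem_orthogonal hw (hAKperp v hv)
  rw [hTu, hpyth]
  simp only [map_sub, inner_sub_left, inner_add_right, hcross₁, hcross₂, map_add, map_zero]
  linarith [hK w hw, hKperp v hv]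

end Submodule

theorem IsCompactOperator.finite_setOf_lt_hasEigenvalue {S : E →L[𝕜] E}
    (hS : IsCompactOperator S) (hSsymm : (S : E →ₗ[𝕜] E).IsSymmetric) {ε : ℝ} (hε : 0 < ε) :
    {μ : ℝ | ε < μ ∧ HasEigenvalue (S : End 𝕜 E) μ}.Finite := by
  -- Unit eigenvectors for distinct eigenvalues are orthogonal, so their images under `S` form an
  -- `ε`-separated sequence in a compact set.
  by_contra hinf
  let μ : ℕ → ℝ := fun n => Set.Infinite.natEmbedding _ hinf n
  have hμ (n : ℕ) : ε < μ n ∧ HasEigenvalue (S : End 𝕜 E) (μ n) :=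
    (Set.Infinite.natEmbedding _ hinf n).2
  have hμinj : Function.Injective μ :=
    Subtype.val_injective.comp (Set.Infinite.natEmbedding _ hinf).injective
  have hunit (n : ℕ) : ∃ e : E, ‖e‖ = 1 ∧ S e = (μ n : 𝕜) • e := by
    obtain ⟨u, hu, hu0⟩ := (hμ n).2.exists_hasEigenvector
    refine ⟨(‖u‖⁻¹ : 𝕜) • u, norm_smul_inv_norm hu0, ?_⟩
    rw [map_smul, show S u = (μ n : 𝕜) • u from mem_eigenspace_iff.1 hu, smul_comm]
  choose e he hSe using hunit
  obtain ⟨K, hK, hSK⟩ := hS.image_closedBall_subset_compact 1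
  obtain ⟨a, -, φ, hφ, hlim⟩ := hK.tendsto_subseq fun n => hSK ⟨e n, by simp [he], rfl⟩
  obtain ⟨N, hN⟩ := Metric.cauchySeq_iff'.1 hlim.cauchySeq ε hε
  set i := φ (N + 1)
  set j := φ N
  have horth : ⟪S (e i), S (e j)⟫_𝕜 = 0 := by
    have hne : (μ i : 𝕜) ≠ μ j := by
      simpa using hμinj.ne (hφ.injective.ne (Nat.succ_ne_self N))
    have he_orth : ⟪e i, e j⟫_𝕜 = 0 := hSsymm.orthogonalFamily_eigenspaces hne
      ⟨e i, mem_eigenspace_iff.2 (hSe i)⟩ ⟨e j, mem_eigenspace_iff.2 (hSe j)⟩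
    rw [hSe, hSe, inner_smul_left, inner_smul_right, he_orth, mul_zero, mul_zero]
  have hfar : ε ^ 2 < ‖S (e i) - S (e j)‖ ^ 2 :=
    calc ε ^ 2 < ‖S (e i)‖ ^ 2 := by
          rw [hSe, norm_smul, he, mul_one, norm_ofReal, sq_abs]
          exact pow_lt_pow_left₀ (hμ i).1 hε.le two_ne_zero
      _ ≤ ‖S (e i) - S (e j)‖ ^ 2 := by
          rw [norm_sub_sq (𝕜 := 𝕜), horth, map_zero]
          nlinarith [sq_nonneg ‖S (e j)‖]
  have hnear : ‖S (e i) - S (e j)‖ < ε := by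
    simpa [dist_eq_norm] using hN (N + 1) N.le_succ
  nlinarith [norm_nonneg (S (e i) - S (e j))]

theorem LinearMap.IsSymmetric.mapsTo_orthogonal {T : E →ₗ[𝕜] E} (hT : T.IsSymmetric)
    {K : Submodule 𝕜 E} (hK : ∀ w ∈ K, T w ∈ K) : ∀ v ∈ Kᗮ, T v ∈ Kᗮ := fun v hv w hw => by
  rw [← hT w v]
  exact hv (T w) (hK w hw)

theorem LinearMap.IsSymmetric.le_re_inner_of_mem_iSup_eigenspace {T : E →ₗ[𝕜] E}
    (hT : T.IsSymmetric) {s : Finset ℝ} {c : ℝ} (hc : ∀ μ ∈ s, c ≤ μ) {w : E}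
    (hw : w ∈ ⨆ μ ∈ s, eigenspace T (μ : 𝕜)) : c * ‖w‖ ^ 2 ≤ re ⟪T w, w⟫_𝕜 := by
  obtain ⟨v, rfl⟩ := (mem_iSup_finset_iff_exists_sum _ w).1 hw
  have hV := hT.orthogonalFamily_eigenspaces.comp (ofReal_injective (K := 𝕜))
  have hTv : T (∑ μ ∈ s, (v μ : E)) = ∑ μ ∈ s, ((μ : 𝕜) • v μ : eigenspace T (μ : 𝕜)) := by
    simp [map_sum, mem_eigenspace_iff.1 (v _).2]
  have hinner := hV.inner_sum (fun μ => (μ : 𝕜) • v μ) v s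
  have hnorm := hV.norm_sum v s
  simp only [coe_subtypeₗᵢ, subtype_apply] at hinner hnorm
  rw [hTv, hinner, hnorm, Finset.mul_sum, map_sum]
  refine Finset.sum_le_sum fun μ hμ => ?_
  rw [inner_smul_left, conj_ofReal, re_ofReal_mul, inner_self_eq_norm_sq]
  exact mul_le_mul_of_nonneg_right (hc μ hμ) (sq_nonneg _)

namespace ContinuousLinearMap

section RCLike

variable (S : E →L[𝕜] E) (ε : ℝ)

/-- The space `W` of the statement, for `ε = 1 / k ^ 2`. -/
def closedEigenspanGT : Submodule 𝕜 E :=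
  (span 𝕜 {u | ∃ μ : ℝ, ε < μ ∧ u ≠ 0 ∧ S u = (μ : 𝕜) • u}).topologicalClosure

theorem mapsTo_closedEigenspanGT : ∀ w ∈ S.closedEigenspanGT ε, S w ∈ S.closedEigenspanGT ε := by
  refine topologicalClosure_minimal (t := (S.closedEigenspanGT ε).comap (S : E →ₗ[𝕜] E)) _ ?_
    (isClosed_topologicalClosure _ |>.preimage S.continuous)
  rw [span_le]
  rintro u ⟨μ, hμ, hu0, hSu⟩
  change S u ∈ S.closedEigenspanGT ε
  rw [hSu]
  exact smul_mem _ _ (le_topologicalClosure _ (subset_span ⟨μ, hμ, hu0, hSu⟩))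

theorem re_inner_id_sub_smul_apply_self (r : ℝ) (u : E) :
    re ⟪(ContinuousLinearMap.id 𝕜 E - (r : 𝕜) • S) u, u⟫_𝕜 = ‖u‖ ^ 2 - r * re ⟪S u, u⟫_𝕜 := by
  simp [inner_sub_left, inner_smul_left]

variable {S ε}

theorem _root_.LinearMap.IsSymmetric.isTCoercive_id_sub_smul (hSsymm : (S : E →ₗ[𝕜] E).IsSymmetric)
    (K : Submodule 𝕜 E) [K.HasOrthogonalProjection] (hSK : ∀ w ∈ K, S w ∈ K) {r c m : ℝ}
    (hr : 0 ≤ r) (hrc : 1 < r * c) (hrm : r * m < 1)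
    (hcK : ∀ w ∈ K, c * ‖w‖ ^ 2 ≤ re ⟪S w, w⟫_𝕜)
    (hmK : ∀ v ∈ Kᗮ, re ⟪S v, v⟫_𝕜 ≤ m * ‖v‖ ^ 2) :
    (ContinuousLinearMap.id 𝕜 E - (r : 𝕜) • S).IsTCoercive
      (ContinuousLinearMap.id 𝕜 E - 2 • K.starProjection) := by
  have hSKperp := hSsymm.mapsTo_orthogonal hSK
  refine K.isTCoercive_id_sub_two_smul_starProjection (γ := min (r * c - 1) (1 - r * m))
    (fun w hw => sub_mem hw (smul_mem _ _ (hSK w hw)))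
    (fun v hv => sub_mem hv (smul_mem _ _ (hSKperp v hv)))
    (lt_min (by linarith) (by linarith)) (fun w hw => ?_) (fun v hv => ?_)
  · rw [S.re_inner_id_sub_smul_apply_self]
    nlinarith [min_le_left (r * c - 1) (1 - r * m), hcK w hw, sq_nonneg ‖w‖]
  · rw [S.re_inner_id_sub_smul_apply_self]
    nlinarith [min_le_right (r * c - 1) (1 - r * m), hmK v hv, sq_nonneg ‖v‖]

theorem _root_.IsCompactOperator.exists_gt_forall_le_re_inner_closedEigenspanGT
    (hS : IsCompactOperator S) (hSsymm : (S : E →ₗ[𝕜] E).IsSymmetric) (hε : 0 < ε) :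
    ∃ c > ε, ∀ w ∈ S.closedEigenspanGT ε, c * ‖w‖ ^ 2 ≤ re ⟪S w, w⟫_𝕜 := by
  have hF := hS.finite_setOf_lt_hasEigenvalue hSsymm hε
  obtain ⟨c, hcF, hεc⟩ : ∃ c, (∀ μ ∈ hF.toFinset, c ≤ μ) ∧ ε < c := by
    refine (((Finset.eventually_all _).2 fun μ hμ => ?_).and self_mem_nhdsWithin).exists
      (f := 𝓝[>] ε)
    filter_upwards [Ioo_mem_nhdsGT (hF.mem_toFinset.1 hμ).1] with c hc using hc.2.le
  have hspan : span 𝕜 {u | ∃ μ : ℝ, ε < μ ∧ u ≠ 0 ∧ S u = (μ : 𝕜) • u} ≤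
      ⨆ μ ∈ hF.toFinset, eigenspace (S : End 𝕜 E) (μ : 𝕜) := by
    rw [span_le]
    rintro u ⟨μ, hμ, hu0, hSu⟩
    have hu : u ∈ eigenspace (S : End 𝕜 E) (μ : 𝕜) := mem_eigenspace_iff.2 hSu
    exact mem_iSup_of_mem μ <| mem_iSup_of_mem
      (hF.mem_toFinset.2 ⟨hμ, hasEigenvalue_of_hasEigenvector ⟨hu, hu0⟩⟩) hu
  have hclosure : closure (span 𝕜 {u | ∃ μ : ℝ, ε < μ ∧ u ≠ 0 ∧ S u = (μ : 𝕜) • u} : Set E) ⊆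
      {w | c * ‖w‖ ^ 2 ≤ re ⟪S w, w⟫_𝕜} :=
    closure_minimal (fun w hw => hSsymm.le_re_inner_of_mem_iSup_eigenspace hcF (hspan hw))
      (isClosed_le (by fun_prop) (by fun_prop))
  exact ⟨c, hεc, fun w hw => hclosure hw⟩

end RCLike

section Complex

variable {X : Type*} [NormedAddCommGroup X] [InnerProductSpace ℂ X] [CompleteSpace X]
  {S : X →L[ℂ] X} {ε : ℝ}

theorem _root_.IsCompactOperator.norm_lt_of_forall_not_hasEigenvalue (hS : IsCompactOperator S)
    (hpos : S.IsPositive) (hε : 0 < ε) (h : ∀ μ : ℝ, ε ≤ μ → ¬HasEigenvalue (S : End ℂ X) μ) :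
    ‖S‖ < ε := by
  obtain hX | hX := subsingleton_or_nontrivial X
  · rwa [Subsingleton.elim S 0, norm_zero]
  by_contra! hle
  have hspec : ((‖S‖ : ℝ) : ℂ) ∈ spectrum ℂ S := (spectrum.algebraMap_mem_iff ℂ).2
    (CStarAlgebra.norm_mem_spectrum_of_nonneg ((nonneg_iff_isPositive S).2 hpos))
  exact h ‖S‖ hle ((hS.hasEigenvalue_iff_mem_spectrum (by exact_mod_cast (hε.trans_le hle).ne')).2
    hspec)

theorem _root_.IsCompactOperator.exists_lt_forall_re_inner_le_orthogonal_closedEigenspanGT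
    (hS : IsCompactOperator S) (hpos : S.IsPositive) (hε : 0 < ε)
    (hεev : ¬HasEigenvalue (S : End ℂ X) ε) :
    ∃ m < ε, ∀ v ∈ (S.closedEigenspanGT ε)ᗮ, re ⟪S v, v⟫_ℂ ≤ m * ‖v‖ ^ 2 := by
  set W := S.closedEigenspanGT ε
  have hinv : ∀ v ∈ Wᗮ, S v ∈ Wᗮ :=
    hpos.isSymmetric.mapsTo_orthogonal (S.mapsTo_closedEigenspanGT ε)
  set S' : Wᗮ →L[ℂ] Wᗮ := S.restrict hinv
  have hS' : IsCompactOperator S' := hS.restrict' hinv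
  have hpos' : S'.IsPositive := ⟨hpos.isSymmetric.restrict_invariant hinv, fun v => hpos.2 v⟩
  refine ⟨‖S'‖, hS'.norm_lt_of_forall_not_hasEigenvalue hpos' hε fun μ hμ hev => ?_,
    fun v hv => ?_⟩
  · obtain ⟨⟨v, hvW⟩, hv, hv0⟩ := hev.exists_hasEigenvector
    have hSv : S v = (μ : ℂ) • v := congr_arg Subtype.val (mem_eigenspace_iff.1 hv)
    have hv0 : v ≠ 0 := by simpa using hv0
    rcases hμ.eq_or_lt with rfl | hlt
    · exact hεev (hasEigenvalue_of_hasEigenvector ⟨mem_eigenspace_iff.2 hSv, hv0⟩)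
    · exact hv0 (disjoint_def.1 W.orthogonal_disjoint v
        (le_topologicalClosure _ (subset_span ⟨μ, hlt, hv0, hSv⟩)) hvW)
  · calc re ⟪S v, v⟫_ℂ ≤ ‖S v‖ * ‖v‖ := re_inner_le_norm _ _
      _ ≤ ‖S'‖ * ‖v‖ * ‖v‖ := by gcongr; exact S'.le_opNorm ⟨v, hv⟩
      _ = ‖S'‖ * ‖v‖ ^ 2 := by ring

end Complex

end ContinuousLinearMap

end

theorem helmholtz_tcoercivity_general {X : Type*} [NormedAddCommGroup X] [InnerProductSpace ℂ X]
    [CompleteSpace X] (S : X →L[ℂ] X)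
    (hScompact : IsCompactOperator ⇑S) (hSsa : IsSelfAdjoint S)
    (hSpos : ∀ u : X, 0 ≤ (inner ℂ (S u) u : ℂ).re)
    (k : ℝ) (hk : k ≠ 0)
    (hknotev : ∀ u : X, S u = ((1 / k ^ 2 : ℝ) : ℂ) • u → u = 0)
    (W : Submodule ℂ X)
    (hW : W = (Submodule.span ℂ
      {u : X | ∃ μ : ℝ, 1 / k ^ 2 < μ ∧ u ≠ 0 ∧ S u = (μ : ℂ) • u}).topologicalClosure)
    [W.HasOrthogonalProjection] :
    Function.Bijective
      ⇑(ContinuousLinearMap.id ℂ X - 2 • (W.subtypeL.comp W.orthogonalProjectionOnto)) ∧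
    ∃ γ : ℝ, 0 < γ ∧ ∀ u : X,
      γ * ‖u‖ ^ 2 ≤
        (inner ℂ ((ContinuousLinearMap.id ℂ X - (k : ℂ) ^ 2 • S)
          ((ContinuousLinearMap.id ℂ X - 2 • (W.subtypeL.comp W.orthogonalProjectionOnto)) u))
          u : ℂ).re := by
  change W = S.closedEigenspanGT (1 / k ^ 2) at hW
  subst hW
  have hε : 0 < 1 / k ^ 2 := by positivity
  have hk2 : 0 < k ^ 2 := by positivity
  have hεev : ¬HasEigenvalue (S : End ℂ X) (1 / k ^ 2 : ℝ) := fun hev => by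
    obtain ⟨u, hu, hu0⟩ := hev.exists_hasEigenvector
    exact hu0 (hknotev u (mem_eigenspace_iff.1 hu))
  obtain ⟨c, hεc, hc⟩ :=
    hScompact.exists_gt_forall_le_re_inner_closedEigenspanGT hSsa.isSymmetric hε
  obtain ⟨m, hmε, hm⟩ := hScompact.exists_lt_forall_re_inner_le_orthogonal_closedEigenspanGT
    ⟨hSsa.isSymmetric, hSpos⟩ hε hεev
  have hT := hSsa.isSymmetric.isTCoercive_id_sub_smul _ (S.mapsTo_closedEigenspanGT _) hk2.le
    ((div_lt_iff₀' hk2).1 hεc) ((lt_div_iff₀' hk2).1 hmε) hc hm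
  rwa [RCLike.ofReal_pow] at hT

/-- Let `S` be a compact, self-adjoint, injective, nonnegative continuous linear operator on a
complex Hilbert space `X`, and let `k ≠ 0` be real such that `1/k²` is not an eigenvalue of `S`.
With `W` the closed linear span of eigenvectors of `S` for eigenvalues `μ > 1/k²`, `P_W` the
orthogonal projection onto `W` and `T := id - 2 P_W`, the operator `T` is bijective and
`id - k² S` is T-coercive: there is `γ > 0` with `Re ⟨(id - k²S)(Tu), u⟩ ≥ γ ‖u‖²`. -/
theorem helmholtz_tcoercivity {X : Type*} [NormedAddCommGroup X] [InnerProductSpace ℂ X]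
    [CompleteSpace X] (S : X →L[ℂ] X)
    (hScompact : IsCompactOperator ⇑S) (hSsa : IsSelfAdjoint S)
    (hSinj : Function.Injective S)
    (hSpos : ∀ u : X, 0 ≤ (inner ℂ (S u) u : ℂ).re)
    (k : ℝ) (hk : k ≠ 0)
    (hknotev : ∀ u : X, S u = ((1 / k ^ 2 : ℝ) : ℂ) • u → u = 0)
    (W : Submodule ℂ X)
    (hW : W = (Submodule.span ℂ
      {u : X | ∃ μ : ℝ, 1 / k ^ 2 < μ ∧ u ≠ 0 ∧ S u = (μ : ℂ) • u}).topologicalClosure)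
    [W.HasOrthogonalProjection] :
    Function.Bijective
      ⇑(ContinuousLinearMap.id ℂ X - 2 • (W.subtypeL.comp W.orthogonalProjectionOnto)) ∧
    ∃ γ : ℝ, 0 < γ ∧ ∀ u : X,
      γ * ‖u‖ ^ 2 ≤
        (inner ℂ ((ContinuousLinearMap.id ℂ X - (k : ℂ) ^ 2 • S)
          ((ContinuousLinearMap.id ℂ X - 2 • (W.subtypeL.comp W.orthogonalProjectionOnto)) u))
          u : ℂ).re :=
  helmholtz_tcoercivity_general S hScompact hSsa hSpos k hk hknotev W hW
end

section
/- Let V be a finite-dimensional complex inner product space and let S be a self-adjoint positive-definite linear operator on V with eigenvalues μ_1, …, μ_N (listed with multiplicity). Let k be a nonzero real number with 1/k² ≠ μ_i for all i. Let W be the span of all eigenvectors of S with eigenvalue μ_i > 1/k², let P_W be the orthogonal projection onto W, and set T := id_V − 2P_W. Then for all u ∈ V, Re⟨(id_V − k²S)(Tu), u⟩ ≥ γ‖u‖², where γ := min_{1≤i≤N} |1 − k²μ_i| > 0. -/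
/-!
In the eigenbasis `e` of `S`, the operator `id - k²S` is diagonal with entries `dᵢ = 1 - k²μᵢ`,
and `W` is spanned by the `eᵢ` with `dᵢ < 0`. So `T = id - 2P_W` is diagonal with entries
`sign dᵢ`, and `(id - k²S) ∘ T` is diagonal with entries `|dᵢ| ≥ γ`; a diagonal operator with
real entries `≥ γ` in an orthonormal basis is `γ`-coercive by Parseval.
-/

open Submodule RCLike

namespace OrthonormalBasis

variable {ι 𝕜 E : Type*} [Fintype ι] [RCLike 𝕜] [NormedAddCommGroup E] [InnerProductSpace 𝕜 E]
  (e : OrthonormalBasis ι 𝕜 E)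

theorem starProjection_span_image_apply_of_mem {s : Set ι}
    [(span 𝕜 (e '' s)).HasOrthogonalProjection] {i : ι} (hi : i ∈ s) :
    (span 𝕜 (e '' s)).starProjection (e i) = e i :=
  starProjection_eq_self_iff.2 (subset_span ⟨i, hi, rfl⟩)

theorem starProjection_span_image_apply_of_notMem {s : Set ι}
    [(span 𝕜 (e '' s)).HasOrthogonalProjection] {i : ι} (hi : i ∉ s) :
    (span 𝕜 (e '' s)).starProjection (e i) = 0 := by
  have hspan : span 𝕜 (e '' s) ≤ (𝕜 ∙ e i)ᗮ := by
    refine span_le.2 ?_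
    rintro _ ⟨j, hj, rfl⟩
    exact mem_orthogonal_singleton_iff_inner_left.2
      (e.orthonormal.inner_eq_zero (ne_of_mem_of_not_mem hj hi))
  exact (starProjection_apply_eq_zero_iff _).2
    (orthogonal_le hspan (le_orthogonal_orthogonal _ (mem_span_singleton_self _)))

theorem mul_norm_sq_le_re_inner_of_apply_eq_smul (A : E →ₗ[𝕜] E) (a : ι → ℝ)
    (hA : ∀ i, A (e i) = (a i : 𝕜) • e i) {γ : ℝ} (hγ : ∀ i, γ ≤ a i) (u : E) :
    γ * ‖u‖ ^ 2 ≤ re (inner 𝕜 (A u) u) := by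
  have hinner : inner 𝕜 (A u) u = ∑ i, (a i : 𝕜) * ‖inner 𝕜 (e i) u‖ ^ 2 := by
    have hAu : A u = ∑ i, inner 𝕜 (e i) u • (a i : 𝕜) • e i := by
      conv_lhs => rw [← e.sum_repr' u]
      simp [hA]
    simp only [hAu, sum_inner, inner_smul_left, conj_ofReal, inner_conj_symm, ← mul_conj]
    exact Finset.sum_congr rfl fun _ _ => by ring
  rw [hinner, ← e.sum_sq_norm_inner_right, Finset.mul_sum, map_sum]
  refine Finset.sum_le_sum fun i _ => ?_
  norm_cast
  exact mul_le_mul_of_nonneg_right (hγ i) (sq_nonneg _)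

theorem map_sub_two_smul_starProjection_eq_abs_smul (L : E →ₗ[𝕜] E) (d : ι → ℝ)
    (hL : ∀ i, L (e i) = (d i : 𝕜) • e i)
    [(span 𝕜 (e '' {i | d i < 0})).HasOrthogonalProjection] (i : ι) :
    L (e i - (2 : 𝕜) • (span 𝕜 (e '' {i | d i < 0})).starProjection (e i)) =
      ((|d i| : ℝ) : 𝕜) • e i := by
  by_cases hi : d i < 0
  · rw [e.starProjection_span_image_apply_of_mem hi, abs_of_neg hi]
    simp [hL, two_smul]
  · rw [e.starProjection_span_image_apply_of_notMem hi, abs_of_nonneg (not_lt.1 hi)]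
    simp [hL]

end OrthonormalBasis

theorem discrete_tcoercivity_general {V : Type*} [NormedAddCommGroup V] [InnerProductSpace ℂ V]
    [FiniteDimensional ℂ V]
    (S : V →ₗ[ℂ] V)
    (N : ℕ) (hN : 0 < N) (μ : Fin N → ℝ)
    (e : OrthonormalBasis (Fin N) ℂ V)
    (heig : ∀ i : Fin N, S (e i) = (μ i : ℂ) • e i)
    (k : ℝ) (hk : k ≠ 0) (hknotev : ∀ i : Fin N, 1 / k ^ 2 ≠ μ i)
    (W : Submodule ℂ V)
    (hW : W = Submodule.span ℂ {x : V | ∃ i : Fin N, 1 / k ^ 2 < μ i ∧ x = e i}) :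
    0 < Finset.univ.inf' ⟨⟨0, hN⟩, Finset.mem_univ _⟩ (fun i => |1 - k ^ 2 * μ i|) ∧
    ∀ u : V,
      Finset.univ.inf' ⟨⟨0, hN⟩, Finset.mem_univ _⟩ (fun i => |1 - k ^ 2 * μ i|) * ‖u‖ ^ 2 ≤
        (inner ℂ
          ((u - (2 : ℂ) • (W.subtypeL.comp W.orthogonalProjection) u) -
            (k : ℂ) ^ 2 • S (u - (2 : ℂ) • (W.subtypeL.comp W.orthogonalProjection) u))
          u : ℂ).re := by
  have hk2 : 0 < k ^ 2 := by positivity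
  set d : Fin N → ℝ := fun i => 1 - k ^ 2 * μ i with hd
  have hd_neg : ∀ i, d i < 0 ↔ 1 / k ^ 2 < μ i := fun i => by
    rw [div_lt_iff₀ hk2, sub_neg, mul_comm]
  have hd_ne : ∀ i, d i ≠ 0 := fun i h => hknotev i (by
    rw [hd, sub_eq_zero] at h
    rw [div_eq_iff hk2.ne', h, mul_comm])
  have hL : ∀ i, (LinearMap.id - (k : ℂ) ^ 2 • S : V →ₗ[ℂ] V) (e i) = (d i : ℂ) • e i :=
    fun i => by
      simp only [LinearMap.sub_apply, LinearMap.id_apply, LinearMap.smul_apply, heig, smul_smul, hd]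
      push_cast
      rw [sub_smul, one_smul]
  have hW' : W = span ℂ (e '' {i | d i < 0}) := by
    rw [hW]
    congr 1
    ext x
    simp [hd_neg, eq_comm]
  subst hW'
  refine ⟨(Finset.lt_inf'_iff _).2 fun i _ => abs_pos.2 (hd_ne i), fun u => ?_⟩
  refine e.mul_norm_sq_le_re_inner_of_apply_eq_smul
    ((LinearMap.id - (k : ℂ) ^ 2 • S) ∘ₗ
      (LinearMap.id - (2 : ℂ) • (span ℂ (e '' {i | d i < 0})).starProjection.toLinearMap))
    (fun i => |d i|) (e.map_sub_two_smul_starProjection_eq_abs_smul _ d hL)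
    (fun i => ?_) u
  exact Finset.inf'_le _ (Finset.mem_univ i)

/-- Finite-dimensional T-coercivity with explicit constant: if `S` is a self-adjoint
positive-definite operator on a finite-dimensional complex inner product space `V`, with an
orthonormal basis `e` of eigenvectors with (real) eigenvalues `μ i` (listed with multiplicity),
and `k ≠ 0` is real with `1/k² ≠ μ i` for all `i`, then with `W` the span of the eigenvectors
with eigenvalue `> 1/k²`, `P_W` the orthogonal projection onto `W` and `T := id - 2 P_W`, we
have `Re ⟨(id - k²S)(Tu), u⟩ ≥ γ ‖u‖²` for all `u`, where
`γ := min_i |1 - k² μ i| > 0`. -/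
theorem discrete_tcoercivity {V : Type*} [NormedAddCommGroup V] [InnerProductSpace ℂ V]
    [FiniteDimensional ℂ V]
    (S : V →ₗ[ℂ] V) (hSsym : S.IsSymmetric)
    (hSpos : ∀ u : V, u ≠ 0 → 0 < (inner ℂ (S u) u : ℂ).re)
    (N : ℕ) (hN : 0 < N) (μ : Fin N → ℝ)
    (e : OrthonormalBasis (Fin N) ℂ V)
    (heig : ∀ i : Fin N, S (e i) = (μ i : ℂ) • e i)
    (k : ℝ) (hk : k ≠ 0) (hknotev : ∀ i : Fin N, 1 / k ^ 2 ≠ μ i)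
    (W : Submodule ℂ V)
    (hW : W = Submodule.span ℂ {x : V | ∃ i : Fin N, 1 / k ^ 2 < μ i ∧ x = e i}) :
    0 < Finset.univ.inf' ⟨⟨0, hN⟩, Finset.mem_univ _⟩ (fun i => |1 - k ^ 2 * μ i|) ∧
    ∀ u : V,
      Finset.univ.inf' ⟨⟨0, hN⟩, Finset.mem_univ _⟩ (fun i => |1 - k ^ 2 * μ i|) * ‖u‖ ^ 2 ≤
        (inner ℂ
          ((u - (2 : ℂ) • (W.subtypeL.comp W.orthogonalProjection) u) -
            (k : ℂ) ^ 2 • S (u - (2 : ℂ) • (W.subtypeL.comp W.orthogonalProjection) u))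
          u : ℂ).re :=
  discrete_tcoercivity_general S N hN μ e heig k hk hknotev W hW
end

section
/- Let X be a complex Hilbert space and let a : X × X → ℂ be a sesquilinear form that is bounded with continuity constant C_cont, i.e. |a(u, v)| ≤ C_cont‖u‖‖v‖ for all u, v ∈ X. Let X_h ⊆ X be a subspace, T_h : X_h → X_h a bounded linear bijection, and γ > 0 such that |a(w, T_h w)| ≥ γ‖w‖² for all w ∈ X_h. Suppose u ∈ X and u_h ∈ X_h satisfy the Galerkin orthogonality a(u − u_h, v_h) = 0 for all v_h ∈ X_h. Then ‖u − u_h‖ ≤ (1 + C_cont‖T_h‖/γ) · inf_{v_h ∈ X_h} ‖u − v_h‖. -/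
/-- Abstract quasi-optimality (Céa-type) estimate under discrete `T_h`-coercivity of a bounded
sesquilinear form `a` (conjugate-linear in the first slot, linear in the second): if
`|a(u,v)| ≤ C_cont ‖u‖‖v‖`, `|a(w, T_h w)| ≥ γ ‖w‖²` on `X_h`, and Galerkin orthogonality
`a(u - u_h, v_h) = 0` for all `v_h ∈ X_h` holds, then
`‖u - u_h‖ ≤ (1 + C_cont ‖T_h‖ / γ) · inf_{v_h ∈ X_h} ‖u - v_h‖`. -/
theorem quasi_optimality_tcoercive_form {X : Type*} [NormedAddCommGroup X]
    [InnerProductSpace ℂ X]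
    (a : X →ₗ⋆[ℂ] X →ₗ[ℂ] ℂ) (Ccont : ℝ)
    (hbound : ∀ u v : X, ‖a u v‖ ≤ Ccont * ‖u‖ * ‖v‖)
    (Xh : Submodule ℂ X) (Th : Xh →L[ℂ] Xh) (hTh : Function.Bijective Th)
    (γ : ℝ) (hγ : 0 < γ)
    (hcoer : ∀ w : Xh, γ * ‖(w : X)‖ ^ 2 ≤ ‖a (w : X) ((Th w : Xh) : X)‖)
    (u : X) (uh : Xh)
    (hGal : ∀ vh : Xh, a (u - (uh : X)) (vh : X) = 0) :
    ‖u - (uh : X)‖ ≤ (1 + Ccont * ‖Th‖ / γ) * Metric.infDist u (Xh : Set X) := by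
  by_cases huh : u = (uh : X)
  · have h0 : Metric.infDist u (Xh : Set X) = 0 := by
      rw [huh]; exact Metric.infDist_zero_of_mem uh.2
    rw [huh] at h0
    rw [huh, sub_self, norm_zero, h0, mul_zero]
  · have hn : 0 < ‖u - (uh : X)‖ := by
      rw [norm_pos_iff]; exact sub_ne_zero.mpr huh
    have hCcont : 0 ≤ Ccont := by
      have h := hbound (u - uh) (u - uh)
      nlinarith [norm_nonneg ((a (u - (uh : X))) (u - (uh : X))), mul_pos hn hn]
    set c : ℝ := 1 + Ccont * ‖Th‖ / γ with hc
    have hq : 0 ≤ Ccont * ‖Th‖ / γ :=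
      div_nonneg (mul_nonneg hCcont (ContinuousLinearMap.opNorm_nonneg Th)) hγ.le
    have hcpos : 0 < c := by simp only [hc]; linarith
    have key : ∀ vh : Xh, ‖u - (uh : X)‖ ≤ c * ‖u - (vh : X)‖ := by
      intro vh
      set w : Xh := uh - vh with hwdef
      have hw : ((w : Xh) : X) = (u - (vh : X)) - (u - (uh : X)) := by
        simp only [hwdef, Submodule.coe_sub]; abel
      have hsplit : a ((w : Xh) : X) (((Th w : Xh)) : X)
          = a (u - (vh : X)) (((Th w : Xh)) : X) := by
        rw [hw, map_sub, LinearMap.sub_apply, hGal (Th w), sub_zero]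
      have hTw : ‖((Th w : Xh) : X)‖ ≤ ‖Th‖ * ‖(w : X)‖ := Th.le_opNorm w
      have hw2 : γ * ‖(w : X)‖ ^ 2 ≤ Ccont * ‖Th‖ * ‖u - (vh : X)‖ * ‖(w : X)‖ := by
        calc γ * ‖(w : X)‖ ^ 2 ≤ ‖a ((w : Xh) : X) (((Th w : Xh)) : X)‖ := hcoer w
          _ = ‖a (u - (vh : X)) (((Th w : Xh)) : X)‖ := by rw [hsplit]
          _ ≤ Ccont * ‖u - (vh : X)‖ * ‖((Th w : Xh) : X)‖ := hbound _ _
          _ ≤ Ccont * ‖Th‖ * ‖u - (vh : X)‖ * ‖(w : X)‖ := by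
              nlinarith [norm_nonneg (u - (vh : X)), norm_nonneg ((w : Xh) : X),
                mul_nonneg hCcont (norm_nonneg (u - (vh : X)))]
      have hwle : ‖(w : X)‖ ≤ Ccont * ‖Th‖ / γ * ‖u - (vh : X)‖ := by
        rcases eq_or_lt_of_le (norm_nonneg ((w : Xh) : X)) with h0 | h0
        · rw [← h0]
          positivity
        · rw [div_mul_eq_mul_div, le_div_iff₀ hγ]
          nlinarith
      have htri : ‖u - (uh : X)‖ ≤ ‖u - (vh : X)‖ + ‖(w : X)‖ := by
        have : u - (uh : X) = (u - (vh : X)) - ((w : Xh) : X) := by rw [hw]; abel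
        rw [this]
        exact norm_sub_le _ _
      calc ‖u - (uh : X)‖ ≤ ‖u - (vh : X)‖ + ‖(w : X)‖ := htri
        _ ≤ ‖u - (vh : X)‖ + Ccont * ‖Th‖ / γ * ‖u - (vh : X)‖ := by linarith
        _ = c * ‖u - (vh : X)‖ := by rw [hc]; ring
    have hdiv : ‖u - (uh : X)‖ / c ≤ Metric.infDist u (Xh : Set X) := by
      by_contra hcon
      push_neg at hcon
      obtain ⟨y, hy, hlt⟩ := (Metric.infDist_lt_iff ⟨0, Xh.zero_mem⟩).mp hcon
      have hk := key ⟨y, hy⟩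
      rw [dist_eq_norm, lt_div_iff₀ hcpos] at hlt
      simp only at hk
      nlinarith
    calc ‖u - (uh : X)‖ = ‖u - (uh : X)‖ / c * c := by field_simp
      _ ≤ Metric.infDist u (Xh : Set X) * c := by
          exact mul_le_mul_of_nonneg_right hdiv hcpos.le
      _ = c * Metric.infDist u (Xh : Set X) := mul_comm _ _
end

section
/- Let n ∈ ℝ² be a constant vector and let u, v : ℝ² → ℂ be smooth functions with compact support. Then ∫_{ℝ²} (n^⊤(ℋu)(x) n) · conj(Δv(x)) dx = ∫_{ℝ²} Δu(x) · conj(n^⊤(ℋv)(x) n) dx, where ℋ denotes the Hessian matrix of second partial derivatives and Δ the Laplacian. That is, the nematic sesquilinear form (u, v) ↦ ∫ (n^⊤(ℋu)n) conj(Δv) is Hermitian on smooth compactly supported functions. -/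
open MeasureTheory

/-- The second derivative of `u : ℝ² → ℂ` at `x` along the directions `v` (then `w`).
For `v = w = n` this is `nᵀ (ℋu)(x) n`, the second directional derivative along `n`. -/
noncomputable def secondDeriv (u : EuclideanSpace ℝ (Fin 2) → ℂ)
    (v w : EuclideanSpace ℝ (Fin 2)) (x : EuclideanSpace ℝ (Fin 2)) : ℂ :=
  fderiv ℝ (fun y => fderiv ℝ u y v) x w

/-- The Laplacian of `u : ℝ² → ℂ`, the sum of the second partial derivatives. -/
noncomputable def lap (u : EuclideanSpace ℝ (Fin 2) → ℂ)
    (x : EuclideanSpace ℝ (Fin 2)) : ℂ :=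
  ∑ i : Fin 2, secondDeriv u (EuclideanSpace.single i 1) (EuclideanSpace.single i 1) x

section Aux

local notation "E2" => EuclideanSpace ℝ (Fin 2)

/-- Directional derivative operator. -/
noncomputable def dd (w : E2) (f : E2 → ℂ) (x : E2) : ℂ := fderiv ℝ f x w

lemma dd_contDiff {f : E2 → ℂ} (hf : ContDiff ℝ (⊤ : ℕ∞) f) (w : E2) :
    ContDiff ℝ (⊤ : ℕ∞) (dd w f) :=
  (hf.fderiv_right (by simp)).clm_apply contDiff_const

lemma dd_compactSupport {f : E2 → ℂ} (hf : HasCompactSupport f) (w : E2) :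
    HasCompactSupport (dd w f) :=
  hf.fderiv_apply ℝ w

lemma dd_conj (f : E2 → ℂ) (w : E2) (x : E2) :
    dd w (fun y => (starRingEnd ℂ) (f y)) x = (starRingEnd ℂ) (dd w f x) := by
  simp only [dd]
  have : (fun y => (starRingEnd ℂ) (f y)) = fun y => star (f y) := rfl
  rw [this, fderiv_star]
  rfl

lemma conj_contDiff {f : E2 → ℂ} (hf : ContDiff ℝ (⊤ : ℕ∞) f) :
    ContDiff ℝ (⊤ : ℕ∞) (fun y => (starRingEnd ℂ) (f y)) :=
  ((starL' ℝ : ℂ ≃L[ℝ] ℂ).toContinuousLinearMap.contDiff).comp hf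

/-- Clairaut: derivatives commute for smooth functions. -/
lemma dd_comm {f : E2 → ℂ} (hf : ContDiff ℝ (⊤ : ℕ∞) f) (a b : E2) (x : E2) :
    dd a (dd b f) x = dd b (dd a f) x := by
  have hsymm : fderiv ℝ (fderiv ℝ f) x a b = fderiv ℝ (fderiv ℝ f) x b a :=
    (hf.contDiffAt.isSymmSndFDerivAt (by rw [minSmoothness_of_isRCLikeNormedField]; exact WithTop.coe_le_coe.mpr (le_top : (2:ℕ∞) ≤ ⊤))).eq a b
  have key : ∀ c : E2, fderiv ℝ (fun y => fderiv ℝ f y c) x =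
      (fderiv ℝ (fderiv ℝ f) x).flip c := by
    intro c
    have hd : DifferentiableAt ℝ (fderiv ℝ f) x :=
      ((hf.fderiv_right (m := (⊤ : ℕ∞)) (by simp)).differentiable (by simp)) x
    have := fderiv_clm_apply (𝕜 := ℝ) (c := fderiv ℝ f) (u := fun _ => c) hd
      (differentiableAt_const c)
    simp only [fderiv_fun_const, Pi.zero_apply, ContinuousLinearMap.comp_zero, zero_add] at this
    exact this
  show fderiv ℝ (fun y => fderiv ℝ f y b) x a = fderiv ℝ (fun y => fderiv ℝ f y a) x b
  rw [key b, key a]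
  simpa using hsymm

/-- Integration by parts: if `f` has compact support then `∫ f ⬝ (dd w g) = -∫ (dd w f) ⬝ g`. -/
lemma ibp {f g : E2 → ℂ} (hf : ContDiff ℝ (⊤ : ℕ∞) f) (hg : ContDiff ℝ (⊤ : ℕ∞) g)
    (hfs : HasCompactSupport f) (w : E2) :
    ∫ x, f x * dd w g x = -∫ x, dd w f x * g x := by
  apply integral_mul_fderiv_eq_neg_fderiv_mul_of_integrable
  · exact (((dd_contDiff hf w).continuous).mul hg.continuous).integrable_of_hasCompactSupport
      ((dd_compactSupport hfs w).mul_right)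
  · exact ((hf.continuous).mul (dd_contDiff hg w).continuous).integrable_of_hasCompactSupport
      (hfs.mul_right)
  · exact ((hf.continuous).mul hg.continuous).integrable_of_hasCompactSupport (hfs.mul_right)
  · exact fun x _ => hf.differentiable (by simp) x
  · exact fun x _ => hg.differentiable (by simp) x

/-- The key integral identity for a single pair of directions. -/
lemma key_identity {u v : E2 → ℂ} (hu : ContDiff ℝ (⊤ : ℕ∞) u) (hv : ContDiff ℝ (⊤ : ℕ∞) v)
    (hus : HasCompactSupport u) (a b : E2) :
    ∫ x, dd a (dd a u) x * (starRingEnd ℂ) (dd b (dd b v) x) =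
      ∫ x, dd b (dd b u) x * (starRingEnd ℂ) (dd a (dd a v) x) := by
  have step : ∀ c d : E2,
      ∫ x, dd c (dd c u) x * (starRingEnd ℂ) (dd d (dd d v) x) =
        ∫ x, dd d (dd c u) x * (starRingEnd ℂ) (dd c (dd d v) x) := by
    intro c d
    have h1 : ∫ x, dd c (dd c u) x * (starRingEnd ℂ) (dd d (dd d v) x) =
        -∫ x, dd c u x * dd c (fun y => (starRingEnd ℂ) (dd d (dd d v) y)) x := by
      have := ibp (f := dd c u) (g := fun y => (starRingEnd ℂ) (dd d (dd d v) y))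
        (dd_contDiff hu c) (conj_contDiff (dd_contDiff (dd_contDiff hv d) d))
        (dd_compactSupport hus c) c
      -- this : ∫ (dd c u) * dd c (conj ...) = -∫ dd c (dd c u) * conj ...
      have h := congrArg Neg.neg this
      simp only [neg_neg] at h
      rw [← h]
    rw [h1]
    have h2 : ∀ x, dd c (fun y => (starRingEnd ℂ) (dd d (dd d v) y)) x =
        dd d (fun y => (starRingEnd ℂ) (dd c (dd d v) y)) x := by
      intro x
      rw [dd_conj, dd_conj, dd_comm (dd_contDiff hv d) c d x]
    rw [integral_congr_ae (Filter.Eventually.of_forall fun x => by rw [h2 x])]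
    have h3 := ibp (f := dd c u) (g := fun y => (starRingEnd ℂ) (dd c (dd d v) y))
      (dd_contDiff hu c) (conj_contDiff (dd_contDiff (dd_contDiff hv d) c))
      (dd_compactSupport hus c) d
    rw [h3, neg_neg]
  rw [step a b, step b a]
  exact integral_congr_ae (Filter.Eventually.of_forall fun x => by
    simp only [dd_comm hu b a x, dd_comm hv a b x])

end Aux

/-- The nematic sesquilinear form is Hermitian on smooth compactly supported functions:
for a constant director `n` and smooth, compactly supported `u, v : ℝ² → ℂ`,
`∫ (nᵀ(ℋu)n) conj(Δv) = ∫ (Δu) conj(nᵀ(ℋv)n)`. -/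
theorem nematic_form_hermitian (n : EuclideanSpace ℝ (Fin 2))
    (u v : EuclideanSpace ℝ (Fin 2) → ℂ)
    (hu : ContDiff ℝ (⊤ : ℕ∞) u) (hv : ContDiff ℝ (⊤ : ℕ∞) v)
    (hus : HasCompactSupport u) (hvs : HasCompactSupport v) :
    ∫ x : EuclideanSpace ℝ (Fin 2), secondDeriv u n n x * (starRingEnd ℂ) (lap v x) =
      ∫ x : EuclideanSpace ℝ (Fin 2), lap u x * (starRingEnd ℂ) (secondDeriv v n n x) := by
  have hsd : ∀ (f : EuclideanSpace ℝ (Fin 2) → ℂ) (a b : EuclideanSpace ℝ (Fin 2)) x,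
      secondDeriv f a b x = dd b (dd a f) x := fun _ _ _ _ => rfl
  have hlap : ∀ (f : EuclideanSpace ℝ (Fin 2) → ℂ) x,
      lap f x = ∑ i : Fin 2, dd (EuclideanSpace.single i 1) (dd (EuclideanSpace.single i 1) f) x :=
    fun _ _ => rfl
  simp only [hsd, hlap, map_sum, Finset.mul_sum, Finset.sum_mul]
  have hint : ∀ (f g : EuclideanSpace ℝ (Fin 2) → ℂ) (a b c d : EuclideanSpace ℝ (Fin 2)),
      ContDiff ℝ (⊤ : ℕ∞) f → ContDiff ℝ (⊤ : ℕ∞) g → HasCompactSupport f →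
      Integrable (fun x => dd a (dd b f) x * (starRingEnd ℂ) (dd c (dd d g) x)) := by
    intro f g a b c d hf hg hfs
    apply Continuous.integrable_of_hasCompactSupport
    · exact ((dd_contDiff (dd_contDiff hf b) a).continuous).mul
        (Complex.continuous_conj.comp (dd_contDiff (dd_contDiff hg d) c).continuous)
    · exact (dd_compactSupport (dd_compactSupport hfs b) a).mul_right
  rw [integral_finset_sum _ (fun i _ => hint u v n n _ _ hu hv hus),
    integral_finset_sum _ (fun i _ => hint u v _ _ n n hu hv hus)]
  exact Finset.sum_congr rfl fun i _ => key_identity hu hv hus n (EuclideanSpace.single i 1)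
end
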